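/- Let J ⊆ S and s ∈ J. Then τ⁺_J t_s − (−1)^{#J+1} q τ⁻_J ∈ I_q(∅) and τ⁻_J t_s − (−1)^{#J+1} τ⁺_J ∈ I_q(∅). -/

import Mathlib

/-- The ordered monomial `t_J = t_{j_1} ⋯ t_{j_{#J}}` in the free algebra. -/
noncomputable def tMon (R : Type*) [CommRing R] {S : Type*} [LinearOrder S] (J : Finset S) :
    FreeAlgebra R S :=
  ((J.sort (· ≤ ·)).map (FreeAlgebra.ι R)).prod

/-- `ℓ_J(I) = Σ_ν (α_ν - ν) = Σ_{i ∈ I} #{j ∈ J \ I : j < i}`. -/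
def ellJ {S : Type*} [LinearOrder S] (J I : Finset S) : ℕ :=
  ∑ i ∈ I, ((J \ I).filter (· < i)).card

/-- `τ⁻_J = Σ_{I ⊆ J, #I odd} (-1)^{ℓ_J(I)} (-q)^{(#I-1)/2} t_{J∖I}`. -/
noncomputable def tauMinus (R : Type*) [CommRing R] {S : Type*} [LinearOrder S] (q : R)
    (J : Finset S) : FreeAlgebra R S :=
  ∑ I ∈ J.powerset.filter fun I => ¬ 2 ∣ I.card,
    ((-1 : R) ^ ellJ J I * (-q) ^ ((I.card - 1) / 2)) • tMon R (J \ I)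

/-- `τ⁺_J = Σ_{I ⊆ J, #I even} (-1)^{ℓ_J(I)} (-q)^{#I/2} t_{J∖I}`. -/
noncomputable def tauPlus (R : Type*) [CommRing R] {S : Type*} [LinearOrder S] (q : R)
    (J : Finset S) : FreeAlgebra R S :=
  ∑ I ∈ J.powerset.filter fun I => 2 ∣ I.card,
    ((-1 : R) ^ ellJ J I * (-q) ^ (I.card / 2)) • tMon R (J \ I)

/-- Generators of the ideal `I_q(𝔐)`. -/
def gens (R : Type*) [CommRing R] {S : Type*} [LinearOrder S] (q : R) (M : Set (Finset S)) :
    Set (FreeAlgebra R S) :=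
  (Set.range fun s : S => FreeAlgebra.ι R s ^ 2 - algebraMap R _ q) ∪
  {x | ∃ r s : S, s < r ∧
      x = FreeAlgebra.ι R r * FreeAlgebra.ι R s + FreeAlgebra.ι R s * FreeAlgebra.ι R r
        - 2 * algebraMap R _ q} ∪
  {x | ∃ J ∈ M, x = tauMinus R q J}

/-- The two-sided ideal `I_q(𝔐)` of the free algebra. -/
noncomputable def Iq (R : Type*) [CommRing R] {S : Type*} [LinearOrder S] (q : R)
    (M : Set (Finset S)) : TwoSidedIdeal (FreeAlgebra R S) :=
  TwoSidedIdeal.span (gens R q M)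

/-!
Both congruences are identities in any `R`-algebra generated by elements `t_s` with `t_s² = q`
and `t_r t_s + t_s t_r = 2q`, and `FreeAlgebra R S ⧸ I_q(∅)` is such an algebra. Splitting off the
largest element `j` of `J = J' ∪ {j}` gives `τ⁻_J = τ⁻_{J'} t_j + ε τ⁺_{J'}` and
`τ⁺_J = τ⁺_{J'} t_j + ε q τ⁻_{J'}` with `ε = (-1)^{#J'}`. Multiplying on the right by `t_j` uses
`t_j² = q`; multiplying by `t_s` with `s < j` uses `t_j t_s = 2q - t_s t_j` and induction on `J'`.
-/

open Finset

section Recursion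

variable {S : Type*} [LinearOrder S]

lemma tMon_insert_of_forall_lt (R : Type*) [CommRing R] {K : Finset S} {j : S} (hjK : j ∉ K)
    (hmax : ∀ x ∈ K, x < j) :
    tMon R (insert j K) = tMon R K * FreeAlgebra.ι R j := by
  have hsort : (insert j K).sort (· ≤ ·) = K.sort (· ≤ ·) ++ [j] := by
    have hperm : ((insert j K).sort (· ≤ ·)).Perm (K.sort (· ≤ ·) ++ [j]) :=
      (sort_perm_toList _ _).trans <| (toList_insert hjK).trans <|
        (((sort_perm_toList _ _).symm).cons j).trans (List.perm_append_singleton j _).symm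
    refine List.Perm.eq_of_pairwise' (pairwise_sort _ _) ?_ hperm
    refine List.pairwise_append.2 ⟨pairwise_sort _ _, List.pairwise_singleton _ _, ?_⟩
    intro x hx y hy
    rw [List.mem_singleton.1 hy]
    exact (hmax x ((mem_sort _).1 hx)).le
  simp [tMon, hsort]

lemma ellJ_insert_of_subset {J I : Finset S} {j : S} (hj : j ∉ J) (hmax : ∀ x ∈ J, x < j)
    (hI : I ⊆ J) : ellJ (insert j J) I = ellJ J I := by
  refine sum_congr rfl fun i hi => ?_
  rw [insert_sdiff_of_notMem _ (fun h => hj (hI h)), filter_insert,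
    if_neg (hmax i (hI hi)).not_gt]

lemma sdiff_insert_insert_of_notMem {J I : Finset S} {j : S} (hj : j ∉ J) :
    insert j J \ insert j I = J \ I := by
  rw [insert_sdiff_insert, sdiff_insert, erase_eq_of_notMem fun h => hj (mem_sdiff.1 h).1]

lemma ellJ_insert_insert {J I : Finset S} {j : S} (hj : j ∉ J) (hmax : ∀ x ∈ J, x < j)
    (hI : I ⊆ J) : ellJ (insert j J) (insert j I) = (#J - #I) + ellJ J I := by
  rw [ellJ, sdiff_insert_insert_of_notMem hj, sum_insert fun h => hj (hI h),
    filter_true_of_mem fun x hx => hmax x (mem_sdiff.1 hx).1, card_sdiff_of_subset hI, ellJ]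

/-- For odd `#I` the exponent `(#I - 1) / 2` in `τ⁻_J` equals `#I / 2`, so `τ⁺_J` and `τ⁻_J` are
the sums of these terms over even and odd `I ⊆ J` respectively. -/
noncomputable def tauTerm (R : Type*) [CommRing R] (q : R) (J I : Finset S) : FreeAlgebra R S :=
  ((-1 : R) ^ ellJ J I * (-q) ^ (#I / 2)) • tMon R (J \ I)

variable {R : Type*} [CommRing R]

lemma tauPlus_eq_sum_tauTerm (q : R) (J : Finset S) :
    tauPlus R q J = ∑ I ∈ J.powerset.filter fun I => 2 ∣ #I, tauTerm R q J I :=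
  rfl

lemma tauMinus_eq_sum_tauTerm (q : R) (J : Finset S) :
    tauMinus R q J = ∑ I ∈ J.powerset.filter fun I => ¬ 2 ∣ #I, tauTerm R q J I := by
  refine sum_congr rfl fun I hI => ?_
  have hodd := (mem_filter.1 hI).2
  rw [tauTerm, show (#I - 1) / 2 = #I / 2 by omega]

variable {J I : Finset S} {j : S}

lemma tauTerm_insert_of_subset (q : R) (hj : j ∉ J) (hmax : ∀ x ∈ J, x < j) (hI : I ⊆ J) :
    tauTerm R q (insert j J) I = tauTerm R q J I * FreeAlgebra.ι R j := by
  rw [tauTerm, tauTerm, insert_sdiff_of_notMem _ (fun h => hj (hI h)),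
    tMon_insert_of_forall_lt R (fun h => hj (mem_sdiff.1 h).1)
      (fun x hx => hmax x (mem_sdiff.1 hx).1),
    ellJ_insert_of_subset hj hmax hI, smul_mul_assoc]

lemma tauTerm_insert_insert (q : R) (hj : j ∉ J) (hmax : ∀ x ∈ J, x < j) (hI : I ⊆ J) :
    tauTerm R q (insert j J) (insert j I) =
      ((-1 : R) ^ (#J - #I + ellJ J I) * (-q) ^ ((#I + 1) / 2)) • tMon R (J \ I) := by
  rw [tauTerm, ellJ_insert_insert hj hmax hI, sdiff_insert_insert_of_notMem hj,
    card_insert_of_notMem fun h => hj (hI h)]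

lemma tauTerm_insert_insert_of_even (q : R) (hj : j ∉ J) (hmax : ∀ x ∈ J, x < j) (hI : I ⊆ J)
    (heven : 2 ∣ #I) :
    tauTerm R q (insert j J) (insert j I) = ((-1 : R) ^ #J) • tauTerm R q J I := by
  obtain ⟨c, hc⟩ := heven
  obtain ⟨d, hd⟩ := Nat.exists_eq_add_of_le (card_le_card hI)
  rw [tauTerm_insert_insert q hj hmax hI, tauTerm, smul_smul]
  congr 1
  rw [hd, hc, show 2 * c + d - 2 * c = d by omega, show (2 * c + 1) / 2 = c by omega,
    show 2 * c / 2 = c by omega, pow_add _ (2 * c), (even_two_mul c).neg_one_pow]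
  ring

lemma tauTerm_insert_insert_of_odd (q : R) (hj : j ∉ J) (hmax : ∀ x ∈ J, x < j) (hI : I ⊆ J)
    (hodd : ¬ 2 ∣ #I) :
    tauTerm R q (insert j J) (insert j I) = ((-1 : R) ^ #J * q) • tauTerm R q J I := by
  obtain ⟨c, hc⟩ : ∃ c, #I = 2 * c + 1 := ⟨#I / 2, by omega⟩
  obtain ⟨d, hd⟩ := Nat.exists_eq_add_of_le (card_le_card hI)
  rw [tauTerm_insert_insert q hj hmax hI, tauTerm, smul_smul]
  congr 1
  rw [hd, hc, show 2 * c + 1 + d - (2 * c + 1) = d by omega,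
    show (2 * c + 1 + 1) / 2 = c + 1 by omega, show (2 * c + 1) / 2 = c by omega,
    pow_add _ (2 * c + 1), pow_succ (-1 : R) (2 * c), (even_two_mul c).neg_one_pow]
  ring

lemma sum_tauTerm_insert (q : R) (hj : j ∉ J) (hmax : ∀ x ∈ J, x < j)
    (P : Finset S → Prop) [DecidablePred P] :
    ∑ I ∈ (insert j J).powerset.filter P, tauTerm R q (insert j J) I =
      (∑ I ∈ J.powerset.filter P, tauTerm R q J I) * FreeAlgebra.ι R j +
        ∑ I ∈ J.powerset.filter (fun I => P (insert j I)),
          tauTerm R q (insert j J) (insert j I) := by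
  rw [sum_filter, sum_powerset_insert hj, ← sum_filter, ← sum_filter, sum_mul]
  congr 1
  exact sum_congr rfl fun I hI =>
    tauTerm_insert_of_subset q hj hmax (mem_powerset.1 (mem_filter.1 hI).1)

lemma tauMinus_insert (q : R) (hj : j ∉ J) (hmax : ∀ x ∈ J, x < j) :
    tauMinus R q (insert j J) =
      tauMinus R q J * FreeAlgebra.ι R j + ((-1 : R) ^ #J) • tauPlus R q J := by
  rw [tauMinus_eq_sum_tauTerm, tauMinus_eq_sum_tauTerm, sum_tauTerm_insert q hj hmax,
    tauPlus_eq_sum_tauTerm, smul_sum]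
  congr 1
  refine sum_congr (filter_congr fun I hI => ?_) fun I hI => ?_
  · rw [card_insert_of_notMem fun h => hj (mem_powerset.1 hI h)]
    omega
  · obtain ⟨hI, heven⟩ := mem_filter.1 hI
    exact tauTerm_insert_insert_of_even q hj hmax (mem_powerset.1 hI) heven

lemma tauPlus_insert (q : R) (hj : j ∉ J) (hmax : ∀ x ∈ J, x < j) :
    tauPlus R q (insert j J) =
      tauPlus R q J * FreeAlgebra.ι R j + ((-1 : R) ^ #J * q) • tauMinus R q J := by
  rw [tauPlus_eq_sum_tauTerm, tauPlus_eq_sum_tauTerm, sum_tauTerm_insert q hj hmax,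
    tauMinus_eq_sum_tauTerm, smul_sum]
  congr 1
  refine sum_congr (filter_congr fun I hI => ?_) fun I hI => ?_
  · rw [card_insert_of_notMem fun h => hj (mem_powerset.1 hI h)]
    omega
  · obtain ⟨hI, hodd⟩ := mem_filter.1 hI
    exact tauTerm_insert_insert_of_odd q hj hmax (mem_powerset.1 hI) hodd

end Recursion

section CliffordRelations

variable {R A : Type*} [CommRing R] [Ring A] [Algebra R A] {M P tj ts : A} {ε q : R}

lemma tau_step_mul_max (hε : ε * ε = 1) (htj : tj * tj = algebraMap R A q) :
    (P * tj + (ε * q) • M) * tj = (ε * q) • (M * tj + ε • P) ∧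
      (M * tj + ε • P) * tj = ε • (P * tj + (ε * q) • M) := by
  constructor
  · rw [add_mul, mul_assoc, htj, smul_mul_assoc, ← Algebra.commutes, ← Algebra.smul_def]
    linear_combination (norm := module) -(q • hε • P)
  · rw [add_mul, mul_assoc, htj, smul_mul_assoc, ← Algebra.commutes, ← Algebra.smul_def]
    linear_combination (norm := module) -(q • hε • M)

lemma tau_step_mul_of_lt (hε : ε * ε = 1) (hrel : tj * ts + ts * tj = algebraMap R A (2 * q))
    (hP : P * ts = (-ε * q) • M) (hM : M * ts = (-ε) • P) :
    (P * tj + (ε * q) • M) * ts = (ε * q) • (M * tj + ε • P) ∧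
      (M * tj + ε • P) * ts = ε • (P * tj + (ε * q) • M) := by
  have hswap : tj * ts = algebraMap R A (2 * q) - ts * tj := eq_sub_of_add_eq hrel
  constructor
  · rw [add_mul, mul_assoc, hswap, mul_sub, ← mul_assoc, hP, smul_mul_assoc, ← Algebra.commutes,
      ← Algebra.smul_def, smul_mul_assoc, hM]
    linear_combination (norm := module) -(2 * q) • hε • P
  · rw [add_mul, mul_assoc, hswap, mul_sub, ← mul_assoc, hM, smul_mul_assoc, ← Algebra.commutes,
      ← Algebra.smul_def, smul_mul_assoc, hP]
    linear_combination (norm := module) -(2 * q) • hε • M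

end CliffordRelations

section Lift

variable {S : Type*} [LinearOrder S] {R A : Type*} [CommRing R] [Ring A] [Algebra R A]

theorem lift_tau_mul_of_mem (q : R) (t : S → A) (hsq : ∀ s, t s * t s = algebraMap R A q)
    (hanti : ∀ r s, s < r → t r * t s + t s * t r = algebraMap R A (2 * q)) (J : Finset S) :
    ∀ s ∈ J,
      FreeAlgebra.lift R t (tauPlus R q J) * t s =
          ((-1 : R) ^ (#J + 1) * q) • FreeAlgebra.lift R t (tauMinus R q J) ∧
        FreeAlgebra.lift R t (tauMinus R q J) * t s =
          (-1 : R) ^ (#J + 1) • FreeAlgebra.lift R t (tauPlus R q J) := by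
  induction J using Finset.induction_on_max with
  | empty => simp
  | insert j J hmax ih =>
    intro s hs
    have hj : j ∉ J := fun h => lt_irrefl j (hmax j h)
    have hε : (-1 : R) ^ #J * (-1) ^ #J = 1 := by rw [← pow_add, (Even.add_self _).neg_one_pow]
    rw [tauPlus_insert q hj hmax, tauMinus_insert q hj hmax, card_insert_of_notMem hj,
      show (-1 : R) ^ (#J + 1 + 1) = (-1) ^ #J by ring]
    simp only [map_add, map_mul, map_smul, FreeAlgebra.lift_ι_apply]
    rcases mem_insert.1 hs with rfl | hs
    · exact tau_step_mul_max hε (hsq s)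
    · obtain ⟨hP, hM⟩ := ih s hs
      rw [pow_succ, mul_neg_one] at hP hM
      exact tau_step_mul_of_lt hε (hanti j s (hmax s hs)) hP hM

end Lift

lemma TwoSidedIdeal.sub_mem_iff_mkₐ_eq {R A : Type*} [CommRing R] [Ring A] [Algebra R A]
    (I : TwoSidedIdeal A) (x y : A) : x - y ∈ I ↔ I.ringCon.mkₐ R x = I.ringCon.mkₐ R y :=
  (I.rel_iff x y).symm.trans (RingCon.eq _).symm

section Quotient

variable {S : Type*} [LinearOrder S] {R : Type*} [CommRing R] (q : R) (M : Set (Finset S))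

lemma mkₐ_ι_mul_self (s : S) :
    (Iq R q M).ringCon.mkₐ R (FreeAlgebra.ι R s) * (Iq R q M).ringCon.mkₐ R (FreeAlgebra.ι R s) =
      algebraMap R _ q := by
  rw [← map_mul, ← AlgHom.commutes ((Iq R q M).ringCon.mkₐ R) q,
    ← TwoSidedIdeal.sub_mem_iff_mkₐ_eq, ← pow_two]
  exact TwoSidedIdeal.subset_span (Or.inl (Or.inl ⟨s, rfl⟩))

lemma mkₐ_ι_anticomm {r s : S} (h : s < r) :
    (Iq R q M).ringCon.mkₐ R (FreeAlgebra.ι R r) * (Iq R q M).ringCon.mkₐ R (FreeAlgebra.ι R s) +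
        (Iq R q M).ringCon.mkₐ R (FreeAlgebra.ι R s) *
          (Iq R q M).ringCon.mkₐ R (FreeAlgebra.ι R r) =
      algebraMap R _ (2 * q) := by
  rw [← map_mul, ← map_mul, ← map_add, ← AlgHom.commutes ((Iq R q M).ringCon.mkₐ R),
    ← TwoSidedIdeal.sub_mem_iff_mkₐ_eq, map_mul, map_ofNat]
  exact TwoSidedIdeal.subset_span (Or.inl (Or.inr ⟨r, s, h, rfl⟩))

end Quotient

theorem stmt8_general {S : Type*} [LinearOrder S] {R : Type*} [CommRing R] (q : R)
    (J : Finset S) (s : S) (hs : s ∈ J) :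
    tauPlus R q J * FreeAlgebra.ι R s
        - (((-1 : R) ^ (J.card + 1)) * q) • tauMinus R q J ∈ Iq R q (∅ : Set (Finset S)) ∧
    tauMinus R q J * FreeAlgebra.ι R s
        - ((-1 : R) ^ (J.card + 1)) • tauPlus R q J ∈ Iq R q (∅ : Set (Finset S)) := by
  set π := (Iq R q (∅ : Set (Finset S))).ringCon.mkₐ R
  have key := lift_tau_mul_of_mem q (π ∘ FreeAlgebra.ι R) (mkₐ_ι_mul_self q ∅)
    (fun _ _ => mkₐ_ι_anticomm q ∅) J s hs
  rw [FreeAlgebra.lift_comp_ι] at key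
  simp only [TwoSidedIdeal.sub_mem_iff_mkₐ_eq (R := R), map_mul, map_smul]
  exact key

theorem stmt8 {S : Type*} [Fintype S] [LinearOrder S] {R : Type*} [CommRing R] (q : R)
    (J : Finset S) (s : S) (hs : s ∈ J) :
    tauPlus R q J * FreeAlgebra.ι R s
        - (((-1 : R) ^ (J.card + 1)) * q) • tauMinus R q J ∈ Iq R q (∅ : Set (Finset S)) ∧
    tauMinus R q J * FreeAlgebra.ι R s
        - ((-1 : R) ^ (J.card + 1)) • tauPlus R q J ∈ Iq R q (∅ : Set (Finset S)) :=
  stmt8_general q J s hs
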